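/- Let L be an N×N complex matrix with no eigenvalues on the imaginary axis. Then half the signature of L equals ∫_{-∞}^{∞} (1/(2π(1+s²))) Tr((1 + i s L)(L + i s·1)^{-1}) ds, and this integral converges absolutely. -/

import Mathlib

/-!
Both sides are additive over the eigenvalues. With `z = s * I`, the matrix
`(1 + z L) (L + z)⁻¹` is a Möbius function of `L`, so its characteristic roots are
`(1 + z μ) / (μ + z)` for the eigenvalues `μ` of `L`, and the integral splits into scalar
integrals of `(1 + i s μ) / (2π (1 + s²) (μ + i s)) = (1 / 2π) ((μ + i s)⁻¹ + i s / (1 + s²))`.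
This is `O(1 / (1 + s²))`, and has the primitive
`(1 / 2π) (-i log (s - i μ) + (i / 2) log (1 + s²))`: as `s` runs over `ℝ` the point
`s - i μ` stays on one side of the real axis, so the argument of `log (s - i μ)` moves from
`∓π` to `0` according to the sign of `Re μ`, and the scalar integral is `± 1 / 2`.
-/

open MeasureTheory

/-- Total algebraic multiplicity of eigenvalues of `L` with positive real part. -/
noncomputable def posEigMult {N : ℕ} (L : Matrix (Fin N) (Fin N) ℂ) : ℕ :=
  @Multiset.countP ℂ (fun z => 0 < z.re) (Classical.decPred _) (Matrix.charpoly L).roots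

/-- Total algebraic multiplicity of eigenvalues of `L` with negative real part. -/
noncomputable def negEigMult {N : ℕ} (L : Matrix (Fin N) (Fin N) ℂ) : ℕ :=
  @Multiset.countP ℂ (fun z => z.re < 0) (Classical.decPred _) (Matrix.charpoly L).roots

open Complex Filter Polynomial Topology
open scoped Real

namespace Matrix

variable {n K : Type*} [Fintype n] [DecidableEq n] [Field K] [IsAlgClosed K] (A : Matrix n n K)

theorem card_roots_charpoly : Multiset.card A.charpoly.roots = Fintype.card n := by
  rw [splits_iff_card_roots.mp (IsAlgClosed.splits _), charpoly_natDegree_eq_dim]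

theorem det_scalar_sub_eq_prod_roots (x : K) :
    (scalar n x - A).det = (A.charpoly.roots.map (x - ·)).prod := by
  rw [← eval_charpoly, (IsAlgClosed.splits _).eq_prod_roots_of_monic A.charpoly_monic,
    eval_multiset_prod, Multiset.map_map]
  simp

theorem det_smul_add_smul_one_eq_prod_roots (a b : K) :
    (a • A + b • (1 : Matrix n n K)).det = (A.charpoly.roots.map fun μ => a * μ + b).prod := by
  rcases eq_or_ne a 0 with rfl | ha
  · simp [card_roots_charpoly, Multiset.map_const']
  have hA : a • A + b • (1 : Matrix n n K) = -a • (scalar n (-b / a) - A) := by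
    have hb : -a * (-b / a) = b := by field_simp
    rw [smul_sub, scalar_apply, ← smul_one_eq_diagonal, smul_smul, hb]
    module
  have hpow : (-a) ^ Fintype.card n = (A.charpoly.roots.map fun _ => -a).prod := by
    simp [Multiset.map_const', card_roots_charpoly]
  rw [hA, det_smul, det_scalar_sub_eq_prod_roots, hpow, ← Multiset.prod_map_mul]
  congr 1
  refine Multiset.map_congr rfl fun μ _ => ?_
  field_simp
  ring

theorem roots_charpoly_smul_add_smul_one_mul_inv (a b c d : K)
    (h : ∀ μ ∈ A.charpoly.roots, c * μ + d ≠ 0) :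
    ((a • A + b • (1 : Matrix n n K)) * (c • A + d • (1 : Matrix n n K))⁻¹).charpoly.roots =
      A.charpoly.roots.map fun μ => (a * μ + b) / (c * μ + d) := by
  set B := c • A + d • (1 : Matrix n n K)
  have hB : B.det ≠ 0 := by
    rw [det_smul_add_smul_one_eq_prod_roots]
    exact Multiset.prod_ne_zero fun h0 => by
      obtain ⟨μ, hμ, hμ0⟩ := Multiset.mem_map.mp h0
      exact h μ hμ hμ0
  have hmul (x : K) :
      (scalar n x - (a • A + b • 1) * B⁻¹) * B = (x * c - a) • A + (x * d - b) • 1 := by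
    rw [sub_mul, Matrix.mul_assoc, nonsing_inv_mul _ (isUnit_iff_ne_zero.mpr hB), Matrix.mul_one,
      scalar_apply, ← smul_one_eq_diagonal, smul_one_mul]
    module
  suffices ((a • A + b • 1) * B⁻¹).charpoly =
      ((A.charpoly.roots.map fun μ => (a * μ + b) / (c * μ + d)).map (X - C ·)).prod by
    rw [this, roots_multiset_prod_X_sub_C]
  refine Polynomial.funext fun x => mul_right_cancel₀ hB ?_
  rw [eval_charpoly, ← det_mul, hmul, det_smul_add_smul_one_eq_prod_roots,
    det_smul_add_smul_one_eq_prod_roots, eval_multiset_prod, Multiset.map_map, Multiset.map_map,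
    mul_comm, ← Multiset.prod_map_mul]
  refine congrArg _ (Multiset.map_congr rfl fun μ hμ => ?_)
  simp only [Function.comp_apply, eval_sub, eval_X, eval_C]
  field_simp [h μ hμ]
  ring

theorem trace_smul_add_smul_one_mul_inv (a b c d : K)
    (h : ∀ μ ∈ A.charpoly.roots, c * μ + d ≠ 0) :
    ((a • A + b • (1 : Matrix n n K)) * (c • A + d • (1 : Matrix n n K))⁻¹).trace =
      (A.charpoly.roots.map fun μ => (a * μ + b) / (c * μ + d)).sum := by
  rw [trace_eq_sum_roots_charpoly, roots_charpoly_smul_add_smul_one_mul_inv A a b c d h]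

end Matrix

theorem Complex.add_ofReal_mul_I_ne_zero {μ : ℂ} (hμ : μ.re ≠ 0) (s : ℝ) : μ + s * I ≠ 0 :=
  fun h => hμ (by simpa using congrArg re h)

theorem Complex.one_add_ofReal_sq_ne_zero (s : ℝ) : (1 + s ^ 2 : ℂ) ≠ 0 := by
  exact_mod_cast (by positivity : (1 + s ^ 2 : ℝ) ≠ 0)

theorem Complex.tendsto_log_sub_sub_log_neg_sub {w : ℂ} (hw : 0 < w.im) :
    Tendsto (fun R : ℝ => log (R - w) - log (-R - w)) atTop (𝓝 (π * I)) := by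
  have hsmall : Tendsto (fun R : ℝ => w * (R : ℂ)⁻¹) atTop (𝓝 0) := by
    simpa using (tendsto_ofReal_iff.mpr tendsto_inv_atTop_zero).const_mul w
  have hright : Tendsto (fun R : ℝ => log (1 - w * (R : ℂ)⁻¹)) atTop (𝓝 0) := by
    simpa [Function.comp_def] using (continuousAt_clog one_mem_slitPlane).tendsto.comp
      (by simpa using (tendsto_const_nhds (x := (1 : ℂ))).sub hsmall)
  have hleft : Tendsto (fun R : ℝ => log (-1 - w * (R : ℂ)⁻¹)) atTop (𝓝 (-(π * I))) := by
    have hlim := tendsto_log_nhdsWithin_im_neg_of_re_neg_of_im_zero (z := -1)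
      (by norm_num) (by norm_num)
    simp only [norm_neg, norm_one, Real.log_one, ofReal_zero, zero_sub] at hlim
    refine hlim.comp (tendsto_nhdsWithin_iff.mpr
      ⟨by simpa using tendsto_const_nhds.sub hsmall, ?_⟩)
    filter_upwards [eventually_gt_atTop 0] with R hR
    simp [← ofReal_inv, mul_pos hw (inv_pos.mpr hR)]
  refine ((hright.sub hleft).congr' ?_).trans (by rw [sub_neg_eq_add, zero_add])
  filter_upwards [eventually_gt_atTop 0] with R hR
  have hR' : (R : ℂ) ≠ 0 := by exact_mod_cast hR.ne'
  have hne (c : ℂ) (hc : c.im = 0) : c - w * (R : ℂ)⁻¹ ≠ 0 := fun h =>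
    (div_pos hw hR).ne' (by simpa [← ofReal_inv, hc, div_eq_mul_inv] using congrArg im h)
  have h1 : (R : ℂ) - w = R * (1 - w * (R : ℂ)⁻¹) := by field_simp
  have h2 : -(R : ℂ) - w = R * (-1 - w * (R : ℂ)⁻¹) := by field_simp
  rw [h1, h2, log_ofReal_mul hR (hne 1 rfl), log_ofReal_mul hR (hne (-1) (by simp))]
  ring

noncomputable def signKernel (μ : ℂ) (s : ℝ) : ℂ :=
  1 / (2 * π * (1 + s ^ 2)) * ((s * I * μ + 1) / (μ + s * I))

noncomputable def signKernelPrimitive (μ : ℂ) (s : ℝ) : ℂ :=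
  (2 * π : ℂ)⁻¹ * (I / 2 * Real.log (1 + s ^ 2) - I * log (s - I * μ))

theorem continuous_signKernel {μ : ℂ} (hμ : μ.re ≠ 0) : Continuous (signKernel μ) := by
  unfold signKernel
  fun_prop (disch := simp [add_ofReal_mul_I_ne_zero hμ, one_add_ofReal_sq_ne_zero, Real.pi_ne_zero])

theorem norm_signKernel_le {μ : ℂ} (hμ : μ.re ≠ 0) (s : ℝ) :
    ‖signKernel μ s‖ ≤ (‖μ‖ + ‖1 - μ ^ 2‖ / |μ.re|) / (2 * π) * (1 + s ^ 2)⁻¹ := by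
  have hd := add_ofReal_mul_I_ne_zero hμ s
  have hsplit : (s * I * μ + 1) / (μ + s * I) = μ + (1 - μ ^ 2) * (μ + s * I)⁻¹ := by
    field_simp
    ring
  have hinv : ‖(μ + s * I)⁻¹‖ ≤ |μ.re|⁻¹ := by
    rw [norm_inv]
    exact inv_anti₀ (abs_pos.mpr hμ) (by simpa using abs_re_le_norm (μ + s * I))
  have hfac : (1 / (2 * π * (1 + s ^ 2)) : ℂ) = ((2 * π)⁻¹ * (1 + s ^ 2)⁻¹ : ℝ) := by
    push_cast
    field_simp
  rw [signKernel, hsplit, hfac, norm_mul, norm_real, Real.norm_of_nonneg (by positivity)]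
  calc (2 * π)⁻¹ * (1 + s ^ 2)⁻¹ * ‖μ + (1 - μ ^ 2) * (μ + s * I)⁻¹‖
      ≤ (2 * π)⁻¹ * (1 + s ^ 2)⁻¹ * (‖μ‖ + ‖1 - μ ^ 2‖ * |μ.re|⁻¹) := by
        gcongr
        exact (norm_add_le _ _).trans (by rw [norm_mul]; gcongr)
    _ = _ := by ring

theorem integrable_signKernel {μ : ℂ} (hμ : μ.re ≠ 0) : Integrable (signKernel μ) :=
  (integrable_inv_one_add_sq.const_mul _).mono' (continuous_signKernel hμ).aestronglyMeasurable
    (ae_of_all _ (norm_signKernel_le hμ))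

theorem hasDerivAt_signKernelPrimitive {μ : ℂ} (hμ : μ.re ≠ 0) (s : ℝ) :
    HasDerivAt (signKernelPrimitive μ) (signKernel μ s) s := by
  have hslit : (s : ℂ) - I * μ ∈ slitPlane := by
    rw [mem_slitPlane_iff]
    right
    simpa using hμ
  have hlog1 : HasDerivAt (fun t : ℝ => ((Real.log (1 + t ^ 2) : ℝ) : ℂ))
      (((1 + s ^ 2)⁻¹ * (2 * s) : ℝ) : ℂ) s := by
    have := (((hasDerivAt_pow 2 s).const_add 1).log (by positivity)).ofReal_comp
    simpa [div_eq_inv_mul] using this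
  have hlog2 : HasDerivAt (fun t : ℝ => log (t - I * μ)) ((s - I * μ)⁻¹) s := by
    simpa using (((hasDerivAt_id (s : ℂ)).sub_const (I * μ)).clog hslit).comp_ofReal
  refine (((hlog1.const_mul (I / 2)).sub (hlog2.const_mul I)).const_mul
    (2 * π : ℂ)⁻¹).congr_deriv ?_
  have hden : μ + I * s ≠ 0 := by rw [mul_comm]; exact add_ofReal_mul_I_ne_zero hμ s
  have hsq := one_add_ofReal_sq_ne_zero s
  have hlogArg : (s : ℂ) - I * μ ≠ 0 := slitPlane_ne_zero hslit
  simp only [signKernel]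
  push_cast
  field_simp
  linear_combination (-(s : ℂ) ^ 2 * μ * I - s) * I_sq

theorem integral_signKernel_of_re_pos {μ : ℂ} (hμ : 0 < μ.re) : ∫ s, signKernel μ s = 1 / 2 := by
  have hint := integrable_signKernel hμ.ne'
  have hFTC (R : ℝ) : ∫ s in -R..R, signKernel μ s =
      (2 * π : ℂ)⁻¹ * -I * (log (R - I * μ) - log (-R - I * μ)) := by
    rw [intervalIntegral.integral_eq_sub_of_hasDerivAt
      (fun s _ => hasDerivAt_signKernelPrimitive hμ.ne' s) hint.intervalIntegrable]
    simp only [signKernelPrimitive, neg_sq, ofReal_neg]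
    ring
  have hlim := (tendsto_log_sub_sub_log_neg_sub (w := I * μ) (by simpa using hμ)).const_mul
    ((2 * π : ℂ)⁻¹ * -I)
  have hval : (2 * π : ℂ)⁻¹ * -I * (π * I) = 1 / 2 := by
    field_simp
    linear_combination -I_sq
  rw [hval] at hlim
  exact tendsto_nhds_unique
    (intervalIntegral_tendsto_integral hint tendsto_neg_atTop_atBot tendsto_id)
    (hlim.congr fun R => (hFTC R).symm)

theorem signKernel_neg (μ : ℂ) (s : ℝ) : signKernel (-μ) s = -signKernel μ (-s) := by
  simp only [signKernel, ofReal_neg, neg_sq]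
  rw [show -μ + s * I = -(μ + -s * I) by ring, div_neg]
  ring

theorem integral_signKernel {μ : ℂ} (hμ : μ.re ≠ 0) :
    ∫ s, signKernel μ s = if 0 < μ.re then 1 / 2 else -(1 / 2) := by
  rcases hμ.lt_or_gt with hneg | hpos
  · have h (s : ℝ) : signKernel μ s = -signKernel (-μ) (-s) := by
      simpa using signKernel_neg (-μ) s
    rw [if_neg hneg.not_gt, funext h, integral_neg, integral_neg_eq_self (signKernel (-μ)),
      integral_signKernel_of_re_pos (by simpa using hneg)]
  · rw [if_pos hpos, integral_signKernel_of_re_pos hpos]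

namespace MeasureTheory

variable {ι α E : Type*} [MeasurableSpace α] {μ : Measure α} [NormedAddCommGroup E]

theorem integrable_multiset_sum (m : Multiset ι) {f : ι → α → E}
    (hf : ∀ i ∈ m, Integrable (f i) μ) : Integrable (fun a => (m.map fun i => f i a).sum) μ := by
  induction m using Multiset.induction_on with
  | empty => simp
  | cons i m ih =>
    simp only [Multiset.map_cons, Multiset.sum_cons]
    exact (hf i (Multiset.mem_cons_self i m)).add
      (ih fun j hj => hf j (Multiset.mem_cons_of_mem hj))

theorem integral_multiset_sum [NormedSpace ℝ E] (m : Multiset ι) {f : ι → α → E}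
    (hf : ∀ i ∈ m, Integrable (f i) μ) :
    ∫ a, (m.map fun i => f i a).sum ∂μ = (m.map fun i => ∫ a, f i a ∂μ).sum := by
  induction m using Multiset.induction_on with
  | empty => simp
  | cons i m ih =>
    have hm (j : ι) (hj : j ∈ m) : Integrable (f j) μ := hf j (Multiset.mem_cons_of_mem hj)
    simp only [Multiset.map_cons, Multiset.sum_cons]
    rw [integral_add (hf i (Multiset.mem_cons_self i m)) (integrable_multiset_sum m hm), ih hm]

end MeasureTheory

theorem half_signature_eq_sum_roots {N : ℕ} (L : Matrix (Fin N) (Fin N) ℂ)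
    (hL : ∀ μ ∈ L.charpoly.roots, μ.re ≠ 0) :
    (((posEigMult L : ℤ) - (negEigMult L : ℤ) : ℤ) : ℂ) / 2 =
      (L.charpoly.roots.map fun μ => if 0 < μ.re then 1 / 2 else -(1 / 2)).sum := by
  unfold posEigMult negEigMult
  generalize L.charpoly.roots = m at hL ⊢
  induction m using Multiset.induction_on with
  | empty => simp
  | cons μ m ih =>
    rw [Multiset.map_cons, Multiset.sum_cons, ← ih fun ν hν => hL ν (Multiset.mem_cons_of_mem hν),
      Multiset.countP_cons, Multiset.countP_cons]
    rcases (hL μ (Multiset.mem_cons_self μ m)).lt_or_gt with hneg | hpos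
    · simp only [hneg, hneg.not_gt, if_true, if_false]
      push_cast
      ring
    · simp only [hpos, hpos.not_gt, if_true, if_false]
      push_cast
      ring

theorem trace_integrand_eq_sum_signKernel {n : Type*} [Fintype n] [DecidableEq n]
    (L : Matrix n n ℂ) (hL : ∀ μ ∈ L.charpoly.roots, μ.re ≠ 0) (s : ℝ) :
    1 / (2 * π * (1 + s ^ 2)) * ((1 + (s * I) • L) * (L + (s * I) • 1)⁻¹).trace =
      (L.charpoly.roots.map fun μ => signKernel μ s).sum := by
  have hmob : (1 + (s * I) • L) * (L + (s * I) • 1)⁻¹ =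
      ((s * I) • L + (1 : ℂ) • 1) * ((1 : ℂ) • L + (s * I) • 1)⁻¹ := by
    rw [one_smul, one_smul, add_comm]
  rw [hmob, Matrix.trace_smul_add_smul_one_mul_inv L _ _ _ _ fun μ hμ => by
      simpa using add_ofReal_mul_I_ne_zero (hL μ hμ) s,
    ← Multiset.sum_map_mul_left]
  simp only [signKernel, one_mul]

/-- For an `N×N` complex matrix `L` with no eigenvalues on the imaginary
axis, half the signature equals
`∫ (1/(2π(1+s²))) Tr((1 + i s L)(L + i s·1)⁻¹) ds`, the integral being absolutely
convergent (i.e. the integrand is Bochner integrable). -/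
theorem half_signature_eq_trace_integral {N : ℕ} (L : Matrix (Fin N) (Fin N) ℂ)
    (hgap : ∀ z ∈ (Matrix.charpoly L).roots, z.re ≠ 0) :
    Integrable (fun s : ℝ =>
        (1 / (2 * (Real.pi : ℂ) * (1 + (s : ℂ) ^ 2))) *
          Matrix.trace ((1 + ((s : ℂ) * Complex.I) • L) *
            (L + ((s : ℂ) * Complex.I) • 1)⁻¹)) ∧
    (((posEigMult L : ℤ) - (negEigMult L : ℤ) : ℤ) : ℂ) / 2 =
      ∫ s : ℝ,
        (1 / (2 * (Real.pi : ℂ) * (1 + (s : ℂ) ^ 2))) *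
          Matrix.trace ((1 + ((s : ℂ) * Complex.I) • L) *
            (L + ((s : ℂ) * Complex.I) • 1)⁻¹) := by
  have hint (μ : ℂ) (hμ : μ ∈ L.charpoly.roots) : Integrable (signKernel μ) :=
    integrable_signKernel (hgap μ hμ)
  simp_rw [trace_integrand_eq_sum_signKernel L hgap]
  refine ⟨integrable_multiset_sum _ hint, ?_⟩
  rw [integral_multiset_sum _ hint, half_signature_eq_sum_roots L hgap]
  exact congrArg _ (Multiset.map_congr rfl fun μ hμ => (integral_signKernel (hgap μ hμ)).symm)
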